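/- Let (X,b,c,m) be a weighted graph, E a Hermitian vector bundle over X with unitary connection Φ, and W a bundle endomorphism with ⟨W(x)v,v⟩_x ≥ c(x)|v|²_x for all x ∈ X and v ∈ E_x. Then for every section u of E, Q̃_{b,c}(|u|) ≤ Q̃_{Φ,b,W}(u) in [0,∞], where |u| is the function x ↦ |u(x)|_x. In particular, if u belongs to the domain of Q^(N)_{Φ,b,W}, then |u| belongs to the domain of Q^(N)_{b,c}. -/
import Mathlib


open scoped ENNReal ComplexInnerProductSpace Classical

noncomputable section

/-- `u` is an `ℓ²`-section with respect to the vertex measure `m`. -/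
def MemL2Sec {X : Type*} {E : X → Type*} [∀ x, NormedAddCommGroup (E x)]
    (m : X → ℝ) (u : ∀ x, E x) : Prop :=
  Summable fun x => ‖u x‖ ^ 2 * m x

/-- The magnetic Schrödinger energy `Q̃_{Φ,b,W}(u) ∈ [0,∞]` of a section `u`. -/
def magEnergy {X : Type*} {E : X → Type*} [∀ x, NormedAddCommGroup (E x)]
    [∀ x, InnerProductSpace ℂ (E x)]
    (b : X → X → ℝ) (Φ : ∀ x y, E y ≃ₗᵢ[ℂ] E x) (W : ∀ x, E x →ₗ[ℂ] E x)
    (u : ∀ x, E x) : ℝ≥0∞ :=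
  1 / 2 * ∑' p : X × X, ENNReal.ofReal (b p.1 p.2 * ‖u p.1 - Φ p.1 p.2 (u p.2)‖ ^ 2)
    + ∑' x, ENNReal.ofReal (⟪W x (u x), u x⟫).re

/-- The scalar Schrödinger energy `Q̃_{b,c}(f) ∈ [0,∞]` of a function `f : X → ℂ`. -/
def scalEnergy {X : Type*} (b : X → X → ℝ) (c : X → ℝ) (f : X → ℂ) : ℝ≥0∞ :=
  1 / 2 * ∑' p : X × X, ENNReal.ofReal (b p.1 p.2 * ‖f p.1 - f p.2‖ ^ 2)
    + ∑' x, ENNReal.ofReal (c x * ‖f x‖ ^ 2)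

/-- Membership in the domain of the Neumann magnetic form `Q^(N)_{Φ,b,W}`. -/
def inMagDom {X : Type*} {E : X → Type*} [∀ x, NormedAddCommGroup (E x)]
    [∀ x, InnerProductSpace ℂ (E x)] (m : X → ℝ)
    (b : X → X → ℝ) (Φ : ∀ x y, E y ≃ₗᵢ[ℂ] E x) (W : ∀ x, E x →ₗ[ℂ] E x)
    (u : ∀ x, E x) : Prop :=
  MemL2Sec m u ∧ magEnergy b Φ W u < ⊤

/-- Membership in the domain of the Neumann scalar form `Q^(N)_{b,c}`. -/
def inScalDom {X : Type*} (m : X → ℝ) (b : X → X → ℝ) (c : X → ℝ) (f : X → ℂ) : Prop :=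
  (Summable fun x => ‖f x‖ ^ 2 * m x) ∧ scalEnergy b c f < ⊤

end

/-- For a weighted graph `(X,b,c,m)`, a Hermitian vector bundle `E` with
unitary connection `Φ` and a bundle endomorphism `W` with `⟨W(x)v,v⟩ ≥ c(x)|v|²`,
one has `Q̃_{b,c}(|u|) ≤ Q̃_{Φ,b,W}(u)` for every section `u`; in particular, if `u`
is in the domain of `Q^(N)_{Φ,b,W}`, then `|u|` is in the domain of `Q^(N)_{b,c}`. -/
theorem stmt7 {X : Type*} [Countable X]
    (b : X → X → ℝ) (hb0 : ∀ x y, 0 ≤ b x y) (hbdiag : ∀ x, b x x = 0)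
    (hbsymm : ∀ x y, b x y = b y x) (hbsum : ∀ x, Summable fun y => b x y)
    (c : X → ℝ) (hc : ∀ x, 0 ≤ c x) (m : X → ℝ) (hm : ∀ x, 0 < m x)
    (E : X → Type*) [∀ x, NormedAddCommGroup (E x)] [∀ x, InnerProductSpace ℂ (E x)]
    [∀ x, FiniteDimensional ℂ (E x)]
    (Φ : ∀ x y, E y ≃ₗᵢ[ℂ] E x) (hΦ : ∀ x y, Φ x y = (Φ y x).symm)
    (W : ∀ x, E x →ₗ[ℂ] E x) (hW : ∀ x (v : E x), c x * ‖v‖ ^ 2 ≤ (⟪W x v, v⟫).re)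
    (u : ∀ x, E x) :
    scalEnergy b c (fun x => (‖u x‖ : ℂ)) ≤ magEnergy b Φ W u ∧
      (inMagDom m b Φ W u → inScalDom m b c fun x => (‖u x‖ : ℂ)) := by
  
  have key : scalEnergy b c (fun x => (‖u x‖ : ℂ)) ≤ magEnergy b Φ W u := by
    unfold scalEnergy magEnergy
    gcongr with p x
    · exact hb0 p.1 p.2
    · show ‖((‖u p.1‖ : ℂ)) - ((‖u p.2‖ : ℂ))‖ ≤ _
      rw [← Complex.ofReal_sub, Complex.norm_real, Real.norm_eq_abs, abs_sub_le_iff]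
      constructor
      · have := norm_sub_norm_le (u p.1) (Φ p.1 p.2 (u p.2))
        rwa [(Φ p.1 p.2).norm_map] at this
      · have := norm_sub_norm_le (Φ p.1 p.2 (u p.2)) (u p.1)
        rwa [(Φ p.1 p.2).norm_map, norm_sub_rev] at this
    · simpa using hW x (u x)
  refine ⟨key, fun hdom => ?_⟩
  obtain ⟨hl2, hen⟩ := hdom
  constructor
  · simpa [MemL2Sec] using hl2
  · exact lt_of_le_of_lt key hen
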